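/- arXiv:1805.11335 — 3 statements merged into one kernel-verified Lean document; each statement's English description precedes it below -/
import Mathlib

section
/- Let a, b, c, p, q ∈ EuclideanSpace ℝ (Fin 3) be such that det(b − a, c − a, p − a) · det(b − a, c − a, q − a) < 0 (i.e. the two signed volumes are nonzero and of opposite sign, so that p and q lie strictly on opposite sides of the plane through a, b, c). Then the topological interiors of the two tetrahedra convexHull ℝ {a, b, c, p} and convexHull ℝ {a, b, c, q} are disjoint. -/
/-- Scalar triple product of three vectors in `ℝ³`. -/
noncomputable def det3 (u v w : EuclideanSpace ℝ (Fin 3)) : ℝ :=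
  Matrix.det !![u 0, v 0, w 0; u 1, v 1, w 1; u 2, v 2, w 2]

/-!
The linear functional `f = det(b - a, c - a, ·)` takes the same value `t = f a` at `a`, `b`, `c`,
and the hypothesis says `f p - t` and `f q - t` have opposite signs. So the two tetrahedra lie in
the opposite closed half-spaces `{f ≤ t}` and `{t ≤ f}`; as `f` is a nonzero functional it is an
open map, so the interiors of these half-spaces are the disjoint open half-spaces `{f < t}` and
`{t < f}`.
-/

open Set

lemma disjoint_interior_of_subset_preimage_Iic_Ici {X : Type*} [TopologicalSpace X]
    {f : X → ℝ} (hfo : IsOpenMap f) (hfc : Continuous f) {s u : Set X} {t : ℝ}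
    (hs : s ⊆ f ⁻¹' Iic t) (hu : u ⊆ f ⁻¹' Ici t) :
    Disjoint (interior s) (interior u) := by
  have hs' : interior s ⊆ f ⁻¹' Iio t := by
    rw [← interior_Iic, hfo.preimage_interior_eq_interior_preimage hfc]
    exact interior_mono hs
  have hu' : interior u ⊆ f ⁻¹' Ioi t := by
    rw [← interior_Ici, hfo.preimage_interior_eq_interior_preimage hfc]
    exact interior_mono hu
  exact ((Iio_disjoint_Ioi_same).preimage f).mono hs' hu'

lemma disjoint_interior_convexHull_of_separated {E : Type*} [AddCommGroup E] [Module ℝ E]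
    [TopologicalSpace E] [ContinuousAdd E] [ContinuousSMul ℝ E]
    (f : StrongDual ℝ E) {a b c p q : E} (hb : f b = f a) (hc : f c = f a)
    (hp : f p < f a) (hq : f a < f q) :
    Disjoint (interior (convexHull ℝ {a, b, c, p})) (interior (convexHull ℝ {a, b, c, q})) := by
  have hf : f ≠ 0 := by
    rintro rfl
    exact hp.ne rfl
  refine disjoint_interior_of_subset_preimage_Iic_Ici (t := f a)
    (f.isOpenMap_of_ne_zero hf) f.continuous
    (convexHull_min ?_ (convex_halfSpace_le f.isLinear _))
    (convexHull_min ?_ (convex_halfSpace_ge f.isLinear _)) <;>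
  · rintro x (rfl | rfl | rfl | rfl) <;> simp [hb, hc, hp.le, hq.le]

noncomputable def det3L (u v : EuclideanSpace ℝ (Fin 3)) :
    StrongDual ℝ (EuclideanSpace ℝ (Fin 3)) :=
  LinearMap.toContinuousLinearMap
    { toFun := det3 u v
      map_add' := fun w w' => by simp [det3, Matrix.det_fin_three]; ring
      map_smul' := fun r w => by simp [det3, Matrix.det_fin_three]; ring }

lemma det3L_apply (u v w : EuclideanSpace ℝ (Fin 3)) : det3L u v w = det3 u v w := rfl

lemma det3L_self_left (u v : EuclideanSpace ℝ (Fin 3)) : det3L u v u = 0 := by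
  simp [det3L_apply, det3, Matrix.det_fin_three]

lemma det3L_self_right (u v : EuclideanSpace ℝ (Fin 3)) : det3L u v v = 0 := by
  simp [det3L_apply, det3, Matrix.det_fin_three]

/-- If the apexes `p` and `q` lie strictly on opposite sides of the plane through
`a`, `b`, `c`, then the interiors of the tetrahedra `a b c p` and `a b c q` are
disjoint. -/
theorem interiors_disjoint_of_opposite_sides
    (a b c p q : EuclideanSpace ℝ (Fin 3))
    (h : det3 (b - a) (c - a) (p - a) * det3 (b - a) (c - a) (q - a) < 0) :
    Disjoint (interior (convexHull ℝ {a, b, c, p}))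
      (interior (convexHull ℝ {a, b, c, q})) := by
  set f := det3L (b - a) (c - a)
  have hsub : ∀ x, det3 (b - a) (c - a) (x - a) = f x - f a := fun x => map_sub f x a
  have hb : f b = f a := sub_eq_zero.1 <| (map_sub f b a).symm.trans (det3L_self_left _ _)
  have hc : f c = f a := sub_eq_zero.1 <| (map_sub f c a).symm.trans (det3L_self_right _ _)
  rw [hsub, hsub] at h
  rcases mul_neg_iff.1 h with ⟨hp, hq⟩ | ⟨hp, hq⟩
  · exact (disjoint_interior_convexHull_of_separated f hb hc (sub_neg.1 hq) (sub_pos.1 hp)).symm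
  · exact disjoint_interior_convexHull_of_separated f hb hc (sub_neg.1 hp) (sub_pos.1 hq)
end

section
/- Let a, b, c, p, q ∈ EuclideanSpace ℝ (Fin 3) be such that det(b − a, c − a, p − a) · det(b − a, c − a, q − a) > 0 (i.e. the two signed volumes are nonzero and of the same sign, so that p and q lie strictly on the same side of the plane through a, b, c). Then the topological interiors of the two tetrahedra convexHull ℝ {a, b, c, p} and convexHull ℝ {a, b, c, q} have nonempty intersection; in particular the two tetrahedra are not volume-disjoint. -/
open Set Filter Topology AffineMap

theorem eventually_pos_lineMap {c d : ℝ} (hc : 0 ≤ c) (hd : c = 0 → 0 < d) :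
    ∀ᶠ t in 𝓝[>] (0 : ℝ), 0 < lineMap c d t := by
  rcases hc.eq_or_lt with rfl | hc
  · filter_upwards [self_mem_nhdsWithin] with t (ht : 0 < t)
    simpa [lineMap_apply_ring'] using mul_pos ht (hd rfl)
  · refine nhdsWithin_le_nhds ?_
    have hcont : Continuous fun t : ℝ => lineMap c d t := by fun_prop
    exact hcont.tendsto' 0 c (by simp) |>.eventually (lt_mem_nhds hc)

namespace AffineBasis

section Centroid

variable {ι k V P : Type*} [Fintype ι] [DecidableEq ι] [AddCommGroup V] [AddTorsor V P]

theorem coord_centroid_erase_self [DivisionRing k] [CharZero k] [Module k V] [Nontrivial ι]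
    (b : AffineBasis ι k P) (i : ι) : b.coord i ((Finset.univ.erase i).centroid k b) = 0 :=
  b.coord_apply_combination_of_notMem (Finset.notMem_erase i _)
    (Finset.sum_centroidWeights_eq_one_of_nonempty k _
      ((Finset.erase_nonempty (Finset.mem_univ i)).2 (Finset.univ_nontrivial_iff.2 ‹_›)))

theorem coord_centroid_erase_pos [Field k] [LinearOrder k] [IsStrictOrderedRing k] [Module k V]
    (b : AffineBasis ι k P) {i j : ι} (hj : j ≠ i) :
    0 < b.coord j ((Finset.univ.erase i).centroid k b) := by
  have hjs : j ∈ Finset.univ.erase i := Finset.mem_erase.2 ⟨hj, Finset.mem_univ j⟩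
  rw [b.coord_apply_centroid hjs]
  exact inv_pos.2 (Nat.cast_pos.2 (Finset.card_pos.2 ⟨j, hjs⟩))

end Centroid

variable {ι E : Type*} [Fintype ι] [NormedAddCommGroup E] [NormedSpace ℝ E]

theorem eventually_lineMap_mem_interior_convexHull (b : AffineBasis ι ℝ E) {x y : E}
    (hx : ∀ i, 0 ≤ b.coord i x) (hxy : ∀ i, b.coord i x = 0 → 0 < b.coord i y) :
    ∀ᶠ t in 𝓝[>] (0 : ℝ), lineMap x y t ∈ interior (convexHull ℝ (range b)) := by
  simp only [b.interior_convexHull, mem_ofPred_eq, (b.coord _).apply_lineMap]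
  exact eventually_all.2 fun i => eventually_pos_lineMap (hx i) (hxy i)

theorem interior_convexHull_inter_nonempty_of_coord_pos [DecidableEq ι] [Nontrivial ι]
    (b₁ b₂ : AffineBasis ι ℝ E) {i : ι} (hb : ∀ j ≠ i, b₁ j = b₂ j)
    (hi : 0 < b₂.coord i (b₁ i)) :
    (interior (convexHull ℝ (range b₁)) ∩ interior (convexHull ℝ (range b₂))).Nonempty := by
  set s := Finset.univ.erase i
  have hface : s.centroid ℝ b₂ = s.centroid ℝ b₁ :=
    s.affineCombination_congr (fun _ _ => rfl) fun j hj => (hb j (Finset.ne_of_mem_erase hj)).symm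
  have hentry (b : AffineBasis ι ℝ E) (hbi : 0 < b.coord i (b₁ i)) : ∀ᶠ t in 𝓝[>] (0 : ℝ),
      lineMap (s.centroid ℝ b) (b₁ i) t ∈ interior (convexHull ℝ (range b)) := by
    refine b.eventually_lineMap_mem_interior_convexHull (fun j => ?_) fun j hj => ?_
    · rcases eq_or_ne j i with rfl | hji
      · exact (b.coord_centroid_erase_self j).ge
      · exact (b.coord_centroid_erase_pos hji).le
    · obtain rfl : j = i := by_contra fun hji => (b.coord_centroid_erase_pos hji).ne' hj
      exact hbi
  obtain ⟨t, ht₁, ht₂⟩ := ((hentry b₁ (by simp)).and (hface ▸ hentry b₂ hi)).exists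
  exact ⟨_, ht₁, ht₂⟩

end AffineBasis

section Tetrahedron

local notation "ℝ³" => EuclideanSpace ℝ (Fin 3)

theorem det3_eq_basisFun_det (u v w : ℝ³) :
    det3 u v w = (EuclideanSpace.basisFun (Fin 3) ℝ).toBasis.det ![u, v, w] := by
  rw [det3, Module.Basis.det_apply]
  congr 1
  ext i j
  fin_cases i <;> fin_cases j <;> rfl

theorem linearIndependent_of_det3_ne_zero {u v w : ℝ³} (h : det3 u v w ≠ 0) :
    LinearIndependent ℝ ![u, v, w] :=
  ((Module.Basis.is_basis_iff_det _).2 (by rw [← det3_eq_basisFun_det]; exact h.isUnit)).1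

theorem affineIndependent_of_det3_ne_zero {a b c p : ℝ³}
    (h : det3 (b - a) (c - a) (p - a) ≠ 0) : AffineIndependent ℝ ![a, b, c, p] := by
  rw [affineIndependent_iff_linearIndependent_vsub ℝ _ 0,
    ← linearIndependent_equiv (finSuccAboveEquiv (0 : Fin 4))]
  have hvsub : (fun i : {x // x ≠ (0 : Fin 4)} => ![a, b, c, p] i -ᵥ a) ∘
      finSuccAboveEquiv (0 : Fin 4) = ![b - a, c - a, p - a] := by
    ext i
    fin_cases i <;> rfl
  exact hvsub ▸ linearIndependent_of_det3_ne_zero h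

noncomputable def tetrahedronBasis (a b c p : ℝ³) (h : det3 (b - a) (c - a) (p - a) ≠ 0) :
    AffineBasis (Fin 4) ℝ ℝ³ :=
  ⟨![a, b, c, p], affineIndependent_of_det3_ne_zero h, by
    rw [(affineIndependent_of_det3_ne_zero h).affineSpan_eq_top_iff_card_eq_finrank_add_one]
    simp⟩

@[simp]
theorem coe_tetrahedronBasis (a b c p : ℝ³) (h : det3 (b - a) (c - a) (p - a) ≠ 0) :
    ⇑(tetrahedronBasis a b c p h) = ![a, b, c, p] :=
  rfl

theorem det3_add_smul (u v w : ℝ³) (x y z : ℝ) :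
    det3 u v (x • u + y • v + z • w) = z * det3 u v w := by
  simp only [det3, PiLp.add_apply, PiLp.smul_apply, smul_eq_mul, Matrix.det_fin_three,
    Matrix.of_apply, Matrix.cons_val', Matrix.cons_val_zero, Matrix.cons_val_fin_one,
    Matrix.cons_val_one, Matrix.cons_val]
  ring

theorem det3_sub_eq_coord_mul_det3 {a b c q : ℝ³} (h : det3 (b - a) (c - a) (q - a) ≠ 0)
    (p : ℝ³) : det3 (b - a) (c - a) (p - a) =
      (tetrahedronBasis a b c q h).coord 3 p * det3 (b - a) (c - a) (q - a) := by
  set B := tetrahedronBasis a b c q h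
  have hp : p - a = ∑ j, B.coord j p • (B j - a) := by
    simp only [smul_sub, Finset.sum_sub_distrib, ← Finset.sum_smul, B.sum_coord_apply_eq_one,
      B.linear_combination_coord_eq_self, one_smul]
  rw [hp, Fin.sum_univ_four]
  simp only [B, coe_tetrahedronBasis, Matrix.cons_val_zero, Matrix.cons_val_one, Matrix.cons_val,
    sub_self, smul_zero, zero_add]
  exact det3_add_smul (b - a) (c - a) (q - a) _ _ _

end Tetrahedron

/-- If the apexes `p` and `q` lie strictly on the same side of the plane through
`a`, `b`, `c`, then the interiors of the tetrahedra `a b c p` and `a b c q`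
overlap. -/
theorem interiors_overlap_of_same_side
    (a b c p q : EuclideanSpace ℝ (Fin 3))
    (h : 0 < det3 (b - a) (c - a) (p - a) * det3 (b - a) (c - a) (q - a)) :
    (interior (convexHull ℝ {a, b, c, p}) ∩
      interior (convexHull ℝ {a, b, c, q})).Nonempty := by
  have hp := left_ne_zero_of_mul h.ne'
  have hq := right_ne_zero_of_mul h.ne'
  have hcoord : 0 < (tetrahedronBasis a b c q hq).coord 3 p := by
    rw [det3_sub_eq_coord_mul_det3 hq, mul_assoc] at h
    exact pos_of_mul_pos_left h (mul_self_nonneg _)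
  have hrange (x : EuclideanSpace ℝ (Fin 3)) : range ![a, b, c, x] = {a, b, c, x} := by
    simp only [Matrix.range_cons, Matrix.range_empty, union_empty, singleton_union]
  simpa only [← hrange, coe_tetrahedronBasis] using
    (tetrahedronBasis a b c p hp).interior_convexHull_inter_nonempty_of_coord_pos
      (tetrahedronBasis a b c q hq) (fun j hj => by fin_cases j <;> simp_all) hcoord
end

section
/- Let γ : ℝ → EuclideanSpace ℝ (Fin 3) be a continuous closed curve, let K = convexHull ℝ (range γ), and let a, b, c be three affinely independent points of the image of γ such that the triangle T = convexHull ℝ {a, b, c} is a face of K (i.e. IsExtreme ℝ K T holds) and the only points of the image of γ lying in T are a, b, and c. Then the centroid (a + b + c)/3 cannot be written as a convex combination of two points of the curve; that is, there exist no parameters s₁, s₂ and no u ∈ [0, 1] with (a + b + c)/3 = γ(s₁) + u • (γ(s₂) − γ(s₁)). -/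
open Set

/-! If the centroid lay on a chord between curve points `p` and `q`, then either it is an
endpoint, which is then a curve point of the triangle, or it lies in the open chord, and since the
triangle is a face, both endpoints are curve points of the triangle. Either way the centroid lies
on a segment joining two of `a`, `b`, `c`, hence in the affine span of a proper subset of the
vertices, which affine independence forbids. -/

theorem Affine.Simplex.centroid_notMem_affineSpan_pair {k V P : Type*} [DivisionRing k]
    [CharZero k] [AddCommGroup V] [Module k V] [AddTorsor V P] {n : ℕ} (s : Simplex k P n)
    (hn : 2 ≤ n) (i j : Fin (n + 1)) : s.centroid ∉ line[k, s.points i, s.points j] := by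
  have ht : ({i, j} : Set (Fin (n + 1))) ≠ univ := by
    intro h
    have hcard := ncard_insert_le i {j}
    rw [ncard_singleton, h, ncard_univ, Nat.card_eq_fintype_card, Fintype.card_fin] at hcard
    omega
  simpa [image_pair] using s.centroid_notMem_affineSpan_of_ne_univ ht

section Convex

variable {k V : Type*} [Field k] [LinearOrder k] [IsStrictOrderedRing k] [AddCommGroup V]
  [Module k V]

theorem Finset.univ_centroid_mem_convexHull {ι : Type*} [Fintype ι] [Nonempty ι] (p : ι → V) :
    Finset.univ.centroid k p ∈ convexHull k (Set.range p) := by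
  rw [Finset.centroid_eq_centerMass _ Finset.univ_nonempty]
  exact Finset.univ.centerMass_mem_convexHull
    (fun _ _ => by rw [Finset.centroidWeights_apply]; positivity)
    (by simp [Finset.centroidWeights_apply]) (fun i _ => Set.mem_range_self i)

theorem Finset.univ_centroid_vecCons_three (a b c : V) :
    Finset.univ.centroid k ![a, b, c] = (3 : k)⁻¹ • (a + b + c) := by
  rw [Finset.centroid_eq_centerMass _ Finset.univ_nonempty]
  simp [Finset.centerMass, Fin.sum_univ_three, Finset.centroidWeights_apply, smul_add]

theorem inv_three_smul_add_add_mem_convexHull (a b c : V) :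
    (3 : k)⁻¹ • (a + b + c) ∈ convexHull k {a, b, c} := by
  rw [← Finset.univ_centroid_vecCons_three]
  exact convexHull_mono (range_subset_iff.2 (by simp [Fin.forall_fin_succ]))
    (Finset.univ_centroid_mem_convexHull _)

theorem inv_three_smul_add_add_notMem_segment {a b c x y : V}
    (h : AffineIndependent k ![a, b, c]) (hx : x ∈ ({a, b, c} : Set V))
    (hy : y ∈ ({a, b, c} : Set V)) : (3 : k)⁻¹ • (a + b + c) ∉ segment k x y := by
  obtain ⟨i, rfl⟩ : ∃ i, ![a, b, c] i = x := by simpa [Fin.exists_fin_succ, eq_comm] using hx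
  obtain ⟨j, rfl⟩ : ∃ j, ![a, b, c] j = y := by simpa [Fin.exists_fin_succ, eq_comm] using hy
  rw [← Finset.univ_centroid_vecCons_three]
  exact fun hmem => Affine.Simplex.centroid_notMem_affineSpan_pair ⟨_, h⟩ le_rfl i j
    ((AffineSubspace.convex _).segment_subset (left_mem_affineSpan_pair k _ _)
      (right_mem_affineSpan_pair k _ _) hmem)

theorem IsExtreme.exists_mem_inter_segment {S K F : Set V} (hF : IsExtreme k K F) (hSK : S ⊆ K)
    {x y z : V} (hx : x ∈ S) (hy : y ∈ S) (hz : z ∈ F) (hzxy : z ∈ segment k x y) :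
    ∃ x' ∈ S ∩ F, ∃ y' ∈ S ∩ F, z ∈ segment k x' y' := by
  rw [← insert_endpoints_openSegment] at hzxy
  rcases hzxy with rfl | rfl | hopen
  · exact ⟨z, ⟨hx, hz⟩, z, ⟨hx, hz⟩, left_mem_segment k z z⟩
  · exact ⟨z, ⟨hy, hz⟩, z, ⟨hy, hz⟩, left_mem_segment k z z⟩
  · exact ⟨x, ⟨hx, hF.left_mem_of_mem_openSegment (hSK hx) (hSK hy) hz hopen⟩,
      y, ⟨hy, hF.right_mem_of_mem_openSegment (hSK hx) (hSK hy) hz hopen⟩,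
      openSegment_subset_segment k x y hopen⟩

end Convex

theorem centroid_not_on_chord_general
    (γ : ℝ → EuclideanSpace ℝ (Fin 3))
    (K : Set (EuclideanSpace ℝ (Fin 3))) (hK : K = convexHull ℝ (Set.range γ))
    (a b c : EuclideanSpace ℝ (Fin 3))
    (hind : AffineIndependent ℝ ![a, b, c])
    (hface : IsExtreme ℝ K (convexHull ℝ {a, b, c}))
    (honly : Set.range γ ∩ convexHull ℝ {a, b, c} = {a, b, c}) :
    ¬ ∃ s₁ s₂ : ℝ, ∃ u ∈ Set.Icc (0:ℝ) 1,
        (3:ℝ)⁻¹ • (a + b + c) = γ s₁ + u • (γ s₂ - γ s₁) := by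
  rintro ⟨s₁, s₂, u, ⟨hu0, hu1⟩, hchord⟩
  have hseg : (3:ℝ)⁻¹ • (a + b + c) ∈ segment ℝ (γ s₁) (γ s₂) :=
    ⟨1 - u, u, by linarith, hu0, by ring, by rw [hchord]; module⟩
  obtain ⟨x, hx, y, hy, hxy⟩ := hface.exists_mem_inter_segment (hK ▸ subset_convexHull ℝ _)
    (mem_range_self s₁) (mem_range_self s₂) (inv_three_smul_add_add_mem_convexHull a b c) hseg
  rw [honly] at hx hy
  exact inv_three_smul_add_add_notMem_segment hind hx hy hxy

/-- If the triangle on three affinely independent curve points `a`, `b`, `c` is a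
face of the convex hull `K` of the curve, and `a`, `b`, `c` are the only curve
points in the triangle, then the centroid of the triangle is not a convex
combination of two points of the curve. -/
theorem centroid_not_on_chord
    (γ : ℝ → EuclideanSpace ℝ (Fin 3)) (hγ : Continuous γ)
    (K : Set (EuclideanSpace ℝ (Fin 3))) (hK : K = convexHull ℝ (Set.range γ))
    (a b c : EuclideanSpace ℝ (Fin 3))
    (ha : a ∈ Set.range γ) (hb : b ∈ Set.range γ) (hc : c ∈ Set.range γ)
    (hind : AffineIndependent ℝ ![a, b, c])
    (hface : IsExtreme ℝ K (convexHull ℝ {a, b, c}))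
    (honly : Set.range γ ∩ convexHull ℝ {a, b, c} = {a, b, c}) :
    ¬ ∃ s₁ s₂ : ℝ, ∃ u ∈ Set.Icc (0:ℝ) 1,
        (3:ℝ)⁻¹ • (a + b + c) = γ s₁ + u • (γ s₂ - γ s₁) :=
  centroid_not_on_chord_general γ K hK a b c hind hface honly
end
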